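/- Let E be a Banach space, let c > 1, and let (x_n)_{n≥1} be a sequence in the dual space E* with ‖x_n‖ ≥ c^n for all n ≥ 1. Then 0 does not belong to the weak-star closure of the set {x_n : n ≥ 1} in E*. -/

import Mathlib

/-!
Split the indices `n ≥ 1` into the `m` residue classes modulo `m`, where `c ^ m ≥ 4`. Along each
class the norms grow at least like `4 ^ k`, and a gliding-hump construction in the Banach space `E`
produces a single vector `e` on which every functional of the class has modulus at least `1`.
The `m` resulting vectors define a weak-star neighbourhood of `0` missing every `x n`.
-/

lemma norm_le_norm_add_or_norm_le_norm_sub {F : Type*} [SeminormedAddCommGroup F]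
    [NormedSpace ℝ F] (a b : F) : ‖b‖ ≤ ‖a + b‖ ∨ ‖b‖ ≤ ‖a - b‖ := by
  by_contra! h
  have : 2 * ‖b‖ ≤ ‖a + b‖ + ‖a - b‖ := by
    calc 2 * ‖b‖ = ‖(a + b) - (a - b)‖ := by
          rw [add_sub_sub_cancel, ← two_smul ℝ, norm_smul, Real.norm_two]
      _ ≤ ‖a + b‖ + ‖a - b‖ := norm_sub_le _ _
  linarith [h.1, h.2]

section GlidingHump

variable {𝕜 : Type*} [RCLike 𝕜] {E : Type*} [NormedAddCommGroup E] [NormedSpace 𝕜 E]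

lemma StrongDual.exists_norm_le_and_le_norm_apply_add (f : StrongDual 𝕜 E) (z : E) {ρ : ℝ}
    (hρ : 0 ≤ ρ) : ∃ u : E, ‖u‖ ≤ ρ ∧ ‖f‖ * ρ / 2 ≤ ‖f (z + u)‖ := by
  rcases (norm_nonneg f).eq_or_lt with hf | hf
  · exact ⟨0, by simpa using hρ, by simp [← hf]⟩
  obtain ⟨v, hv, hfv⟩ := f.exists_lt_apply_of_lt_opNorm (half_lt_self hf)
  have hw : ‖(ρ : 𝕜) • v‖ ≤ ρ := by
    rw [norm_smul, RCLike.norm_ofReal, abs_of_nonneg hρ]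
    exact mul_le_of_le_one_right hρ hv.le
  have hfw : ‖f‖ * ρ / 2 ≤ ‖f ((ρ : 𝕜) • v)‖ := by
    rw [map_smul, norm_smul, RCLike.norm_ofReal, abs_of_nonneg hρ]
    nlinarith
  rcases norm_le_norm_add_or_norm_le_norm_sub (f z) (f ((ρ : 𝕜) • v)) with h | h
  · exact ⟨(ρ : 𝕜) • v, hw, by rw [map_add]; linarith⟩
  · exact ⟨-((ρ : 𝕜) • v), by rwa [norm_neg], by rw [map_add, map_neg, ← sub_eq_add_neg]; linarith⟩

lemma StrongDual.exists_forall_one_le_norm_apply [CompleteSpace E] (g : ℕ → StrongDual 𝕜 E)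
    (hg : ∀ k, 4 ^ k ≤ ‖g k‖) : ∃ e : E, ∀ k, 1 ≤ ‖g k e‖ := by
  -- With humps of size `6 / 4 ^ k`, `g k` gains `3 ‖g k‖ / 4 ^ k` at step `k` and the later
  -- humps, of total size `2 / 4 ^ k`, cost it at most `2 ‖g k‖ / 4 ^ k`.
  choose F hF_norm hF_apply using fun k w =>
    (g k).exists_norm_le_and_le_norm_apply_add w (by positivity : (0 : ℝ) ≤ 6 * (1 / 4) ^ k)
  let z : ℕ → E := fun n => Nat.rec 0 (fun k w => w + F k w) n
  have hz_succ : ∀ n, z (n + 1) = z n + F n (z n) := fun _ => rfl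
  have hz_dist : ∀ n, dist (z n) (z (n + 1)) ≤ 6 * (1 / 4) ^ n := fun n => by
    rw [hz_succ, dist_self_add_right]
    exact hF_norm n (z n)
  obtain ⟨e, he⟩ := cauchySeq_tendsto_of_complete
    (cauchySeq_of_le_geometric _ _ (by norm_num) hz_dist)
  have hz_tail : ∀ n, ‖z (n + 1) - e‖ ≤ 2 * (1 / 4) ^ n := fun n => by
    rw [← dist_eq_norm]
    refine (dist_le_of_le_geometric_of_tendsto _ _ (by norm_num) hz_dist he (n + 1)).trans_eq ?_
    ring
  refine ⟨e, fun k => ?_⟩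
  calc 1 = 4 ^ k * (1 / 4 : ℝ) ^ k := by rw [← mul_pow]; norm_num
    _ ≤ ‖g k‖ * (1 / 4) ^ k := by gcongr; exact hg k
    _ = ‖g k‖ * (6 * (1 / 4) ^ k) / 2 - ‖g k‖ * (2 * (1 / 4) ^ k) := by ring
    _ ≤ ‖g k (z (k + 1))‖ - ‖g k (z (k + 1) - e)‖ := by
      gcongr
      · rw [hz_succ]; exact hF_apply k (z k)
      · exact (g k).le_of_opNorm_le_of_le le_rfl (hz_tail k)
    _ ≤ ‖g k e‖ := by simpa using norm_sub_norm_le (g k (z (k + 1))) (g k (z (k + 1) - e))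

end GlidingHump

lemma WeakDual.zero_notMem_closure_of_one_le_norm_apply {𝕜 : Type*} [NormedField 𝕜]
    {E : Type*} [AddCommGroup E] [TopologicalSpace E] [Module 𝕜 E] {s : Set E}
    (hs : s.Finite) {S : Set (WeakDual 𝕜 E)} (hS : ∀ y ∈ S, ∃ e ∈ s, 1 ≤ ‖y e‖) :
    (0 : WeakDual 𝕜 E) ∉ closure S := by
  intro h0
  obtain ⟨y, hy_small, hyS⟩ := mem_closure_iff.1 h0 (⋂ e ∈ s, {y | ‖y e‖ < 1})
    (hs.isOpen_biInter fun e _ => isOpen_lt (WeakDual.eval_continuous e).norm continuous_const)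
    (Set.mem_iInter₂.2 fun _ _ => show ‖(0 : 𝕜)‖ < 1 by simp)
  obtain ⟨e, he, hle⟩ := hS y hyS
  exact (Set.mem_iInter₂.1 hy_small e he).not_ge hle

/-- Let `E` be a Banach space over `𝕜 = ℝ` or `ℂ`, let `c > 1`, and let `(x_n)_{n ≥ 1}` be a
sequence in the dual `E*` with `‖x n‖ ≥ c ^ n` for all `n ≥ 1`. Then `0` is not in the
weak-star closure of `{x_n : n ≥ 1}`. -/
theorem stmt_4 {𝕜 : Type*} [RCLike 𝕜] {E : Type*} [NormedAddCommGroup E]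
    [NormedSpace 𝕜 E] [CompleteSpace E] {c : ℝ} (hc : 1 < c) (x : ℕ → StrongDual 𝕜 E)
    (hx : ∀ n : ℕ, 1 ≤ n → c ^ n ≤ ‖x n‖) :
    (0 : WeakDual 𝕜 E) ∉
      closure {y : WeakDual 𝕜 E | ∃ n : ℕ, 1 ≤ n ∧ y = StrongDual.toWeakDual (x n)} := by
  obtain ⟨m, hm⟩ := pow_unbounded_of_one_lt 4 hc
  have hm0 : 0 < m := Nat.pos_of_ne_zero (by rintro rfl; norm_num at hm)
  have hclass : ∀ r, ∃ e : E, ∀ k, 1 ≤ ‖x (r + 1 + k * m) e‖ := fun r =>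
    StrongDual.exists_forall_one_le_norm_apply _ fun k =>
      calc (4 : ℝ) ^ k ≤ (c ^ m) ^ k := pow_le_pow_left₀ (by norm_num) hm.le k
        _ = c ^ (k * m) := by rw [← pow_mul, mul_comm]
        _ ≤ c ^ (r + 1 + k * m) := pow_le_pow_right₀ hc.le (by omega)
        _ ≤ ‖x (r + 1 + k * m)‖ := hx _ (by omega)
  choose e he using hclass
  refine WeakDual.zero_notMem_closure_of_one_le_norm_apply ((Set.finite_Iio m).image e) ?_
  rintro _ ⟨n, hn, rfl⟩
  refine ⟨e ((n - 1) % m), Set.mem_image_of_mem _ (Nat.mod_lt _ hm0), ?_⟩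
  have hdecomp : (n - 1) % m + 1 + (n - 1) / m * m = n := by
    have := Nat.mod_add_div' (n - 1) m
    omega
  have := he ((n - 1) % m) ((n - 1) / m)
  rwa [hdecomp] at this
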